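/- arXiv:1103.5728 — 4 statements merged into one kernel-verified Lean document; each statement's English description precedes it below -/
import Mathlib

section
/- Let n ≥ 2 be an integer and let F be a field of characteristic zero. Then there exist a_1, …, a_{n−1} ∈ F such that the n−1 values P_{a,0}(a_1/n), P_{a,0}(a_2), …, P_{a,0}(a_{n−1}) are pairwise distinct. -/
open Polynomial

/-- `Q_a(x) = n (x - a₁/n)(x - a₂) ⋯ (x - a_{n-1})`, where the tuple
`(a₁, …, a_{n-1})` is given by the values `a 1, …, a (n-1)` of `a : ℕ → F`. -/
noncomputable def Qa (F : Type) [Field F] (n : ℕ) (a : ℕ → F) : Polynomial F :=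
  C (n : F) * (X - C (a 1 / (n : F))) * ∏ i ∈ Finset.Icc 2 (n - 1), (X - C (a i))

/-- `P_{a,b}`: the unique polynomial with derivative `Q_a` and constant coefficient `b`
(in characteristic zero). -/
noncomputable def Pab (F : Type) [Field F] (n : ℕ) (a : ℕ → F) (b : F) : Polynomial F :=
  C b + ∑ i ∈ Finset.range ((Qa F n a).natDegree + 1),
    C ((Qa F n a).coeff i / ((i : F) + 1)) * X ^ (i + 1)

/-!
Induction on the number of critical points. Let `P` and `W` be the antiderivatives of `q` and
`X * q` vanishing at `0`, and suppose `P` takes pairwise distinct values at the critical points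
`x_i`. Adding a critical point `t` turns `P` into `W - t P`. Its values `W(x_i) - t P(x_i)` at two
old critical points agree for at most one `t`, since `P(x_i) ≠ P(x_j)`; its value at `t` agrees
with the one at `x_i` only at a root of `W - X P - W(x_i) + X P(x_i)`, which is a nonzero
polynomial because its second derivative is `-q`. A field of characteristic zero is infinite, so
some `t` avoids these finitely many values.
-/

open Set

namespace Polynomial

variable {F : Type} [Field F]

/-- `Pab F n a b` is `C b + antiderivative (Qa F n a)` by definition. -/
noncomputable def antiderivative (q : F[X]) : F[X] :=
  ∑ i ∈ Finset.range (q.natDegree + 1), C (q.coeff i / ((i : F) + 1)) * X ^ (i + 1)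

lemma coeff_antiderivative_zero (q : F[X]) : (antiderivative q).coeff 0 = 0 := by
  simp [antiderivative, finsetSum_coeff]

lemma coeff_antiderivative_succ (q : F[X]) (j : ℕ) :
    (antiderivative q).coeff (j + 1) = q.coeff j / ((j : F) + 1) := by
  simp only [antiderivative, finsetSum_coeff, coeff_C_mul, coeff_X_pow, Nat.add_right_cancel_iff,
    mul_ite, mul_one, mul_zero, Finset.sum_ite_eq, Finset.mem_range]
  split_ifs with hj
  · rfl
  · rw [coeff_eq_zero_of_natDegree_lt (by omega), zero_div]

variable [CharZero F]

lemma derivative_antiderivative (q : F[X]) : derivative (antiderivative q) = q := by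
  ext j
  rw [coeff_derivative, coeff_antiderivative_succ, div_mul_cancel₀ _ (Nat.cast_add_one_ne_zero j)]

lemma antiderivative_eq_iff {p q : F[X]} :
    antiderivative q = p ↔ derivative p = q ∧ p.coeff 0 = 0 := by
  refine ⟨?_, fun ⟨hp, hp0⟩ => ?_⟩
  · rintro rfl
    exact ⟨derivative_antiderivative q, coeff_antiderivative_zero q⟩
  · have hconst := eq_C_of_derivative_eq_zero (p := antiderivative q - p)
      (by rw [derivative_sub, derivative_antiderivative, hp, sub_self])
    rwa [coeff_sub, coeff_antiderivative_zero, hp0, sub_zero, map_zero, sub_eq_zero] at hconst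

lemma antiderivative_C_mul (c : F) (q : F[X]) : antiderivative (C c * q) = C c * antiderivative q :=
  antiderivative_eq_iff.2
    ⟨by simp [derivative_antiderivative], by simp [coeff_antiderivative_zero]⟩

lemma antiderivative_X_sub_C_mul (t : F) (q : F[X]) :
    antiderivative ((X - C t) * q) = antiderivative (X * q) - C t * antiderivative q :=
  antiderivative_eq_iff.2
    ⟨by simp [derivative_antiderivative, sub_mul], by simp [coeff_antiderivative_zero]⟩

lemma antiderivative_X_mul_sub_X_mul_antiderivative_ne {q : F[X]} (hq : q ≠ 0) (α β : F) :
    antiderivative (X * q) - X * antiderivative q ≠ C α + C β * X := by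
  intro h
  apply hq
  simpa [derivative_antiderivative, derivative_mul] using congrArg (derivative ∘ derivative) h

theorem exists_injOn_eval_antiderivative_X_sub_C_mul {ι : Type*} {q : F[X]} (hq : q ≠ 0)
    {x : ι → F} {s : Set ι} (hs : s.Finite)
    (hinj : InjOn (fun i => (antiderivative q).eval (x i)) s) :
    ∃ t, InjOn (fun i => (antiderivative ((X - C t) * q)).eval (x i)) s ∧
      ∀ i ∈ s, (antiderivative ((X - C t) * q)).eval t ≠
        (antiderivative ((X - C t) * q)).eval (x i) := by
  set P := antiderivative q
  set W := antiderivative (X * q)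
  have hold : ∀ i ∈ s, ∀ j ∈ s,
      {t : F | i ≠ j ∧
        W.eval (x i) - t * P.eval (x i) = W.eval (x j) - t * P.eval (x j)}.Finite :=
    fun i hi j hj => Set.Subsingleton.finite fun t₁ ⟨hij, h₁⟩ t₂ ⟨_, h₂⟩ =>
      mul_right_cancel₀ (sub_ne_zero.2 fun h => hij (hinj hi hj h))
        (by linear_combination h₂ - h₁)
  have hnew : ∀ i ∈ s,
      {t : F | W.eval t - t * P.eval t = W.eval (x i) - t * P.eval (x i)}.Finite := fun i _ =>
    (finite_setOfPred_isRoot (sub_ne_zero.2 (antiderivative_X_mul_sub_X_mul_antiderivative_ne hq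
      (W.eval (x i)) (-P.eval (x i))))).subset fun t ht => by
        simp only [mem_ofPred_eq, IsRoot, eval_sub, eval_add, eval_mul, eval_C, eval_X] at ht ⊢
        linear_combination ht
  obtain ⟨t, ht⟩ := ((hs.biUnion fun i hi => hs.biUnion (hold i hi)).union
    (hs.biUnion hnew)).exists_notMem
  simp only [mem_union, mem_iUnion, mem_ofPred_eq, not_or, not_exists, not_and] at ht
  refine ⟨t, fun i hi j hj hij => ?_, fun i hi h => ht.2 i hi ?_⟩
  · by_contra hne
    exact ht.1 i hi j hj hne (by simpa [antiderivative_X_sub_C_mul] using hij)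
  · simpa [antiderivative_X_sub_C_mul] using h

theorem exists_injOn_eval_antiderivative_prod_X_sub_C (m : ℕ) :
    ∃ c : ℕ → F,
      InjOn (fun i => (antiderivative (∏ j ∈ Finset.Icc 1 m, (X - C (c j)))).eval (c i))
        (Icc 1 m) := by
  induction m with
  | zero => exact ⟨0, by simp⟩
  | succ m ih =>
    obtain ⟨c, hc⟩ := ih
    obtain ⟨t, hold, hnew⟩ := exists_injOn_eval_antiderivative_X_sub_C_mul
      (Finset.prod_ne_zero_iff.2 fun j _ => X_sub_C_ne_zero (c j)) (finite_Icc 1 m) hc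
    have hagree : EqOn (Function.update c (m + 1) t) c (Icc 1 m) :=
      fun i hi => Function.update_of_ne (show i ≠ m + 1 by rw [mem_Icc] at hi; omega) t c
    have hprod : ∏ j ∈ Finset.Icc 1 (m + 1), (X - C (Function.update c (m + 1) t j)) =
        (X - C t) * ∏ j ∈ Finset.Icc 1 m, (X - C (c j)) := by
      rw [Finset.prod_Icc_succ_top (by omega), Function.update_self, mul_comm]
      exact congrArg _ (Finset.prod_congr rfl fun j hj => by
        rw [hagree (Finset.coe_Icc 1 m ▸ hj)])
    refine ⟨Function.update c (m + 1) t, ?_⟩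
    rw [hprod, ← insert_Icc_right_eq_Icc_add_one (by omega), injOn_insert (by simp)]
    refine ⟨hold.congr fun i hi => by simp only [hagree hi], ?_⟩
    rintro ⟨i, hi, h⟩
    simp only [Function.update_self, hagree hi] at h
    exact hnew i hi h.symm

end Polynomial

lemma Qa_eq_C_mul_prod_X_sub_C {F : Type} [Field F] {n : ℕ} (hn : 2 ≤ n) (a : ℕ → F) :
    Qa F n a = C (n : F) *
      ∏ i ∈ Finset.Icc 1 (n - 1), (X - C (if i = 1 then a 1 / (n : F) else a i)) := by
  rw [Qa, mul_assoc, ← Finset.mul_prod_Ioc_eq_prod_Icc (show 1 ≤ n - 1 by omega), if_pos rfl,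
    ← Finset.Icc_add_one_left_eq_Ioc]
  exact congrArg _ (congrArg _ (Finset.prod_congr rfl fun i hi => by
    rw [if_neg (by simp at hi; omega)]))

theorem exists_tuple_with_distinct_critical_values (F : Type) [Field F] [CharZero F]
    (n : ℕ) (hn : 2 ≤ n) :
    ∃ a : ℕ → F, Set.InjOn
      (fun i => (Pab F n a 0).eval (if i = 1 then a 1 / (n : F) else a i))
      (Set.Icc 1 (n - 1)) := by
  obtain ⟨c, hc⟩ := exists_injOn_eval_antiderivative_prod_X_sub_C (F := F) (n - 1)
  have hn0 : (n : F) ≠ 0 := Nat.cast_ne_zero.2 (by omega)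
  set a : ℕ → F := fun i => if i = 1 then n * c 1 else c i
  have hcrit : (fun i => if i = 1 then a 1 / (n : F) else a i) = c := by
    ext i
    split_ifs with hi
    · simp [a, hi, hn0]
    · simp [a, hi]
  have hP : Pab F n a 0 =
      C (n : F) * antiderivative (∏ j ∈ Finset.Icc 1 (n - 1), (X - C (c j))) := by
    rw [← antiderivative_C_mul, ← hcrit, ← Qa_eq_C_mul_prod_X_sub_C hn, Pab, C_0, zero_add]
    rfl
  refine ⟨a, fun i hi j hj hij => hc hi hj (mul_left_cancel₀ hn0 ?_)⟩
  simpa only [hP, eval_mul, eval_C, congrFun hcrit] using hij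
end

section
/- Let n ≥ 2 be an integer, let F be a field of characteristic zero, let a = (a_1, …, a_{n−1}) ∈ F^{n−1}, and let b ∈ F. Then the discriminant of P_{a,b} satisfies Δ_{a,b} = (−1)^{n(n−1)/2} · (n^n·P_{a,0}(a_1/n) + n^n·b) · ∏_{i=2}^{n−1} (P_{a,0}(a_i) + b). -/
open Polynomial

/-! Writing `P = ∏ (X - rᵢ)`, the discriminant equals `(-1)^{n(n-1)/2} ∏ⱼ P'(rⱼ)`. If
`P' = m ∏_{d ∈ D} (X - d)` over the multiset `D` of the `n - 1` critical points, then
`∏ⱼ P'(rⱼ) = mⁿ ∏_{d ∈ D} ∏ⱼ (rⱼ - d) = mⁿ ∏_{d ∈ D} (-1)ⁿ P(d)`, and the total sign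
`(-1)^{n(n-1)}` is `1`. For `P_{a,b}` the critical points are `a₁/n, a₂, …, a_{n-1}`, and
`P_{a,b} = P_{a,0} + b`. -/

open Finset

section Discriminant

variable {R : Type*} [CommRing R]

theorem prod_prod_compl_sub_eq_neg_one_pow_mul_prod_prod_Ioi_sq {n : ℕ} (r : Fin n → R) :
    ∏ i, ∏ j ∈ {i}ᶜ, (r i - r j) =
      (-1) ^ (n * (n - 1) / 2) * ∏ i, ∏ j ∈ Ioi i, (r i - r j) ^ 2 := by
  have hpair (i : Fin n) : ∏ j ∈ Ioi i, (r i - r j) * (r j - r i) =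
      (-1) ^ (n - 1 - i) * ∏ j ∈ Ioi i, (r i - r j) ^ 2 := by
    rw [← Fin.card_Ioi, ← prod_const, ← prod_mul_distrib]
    exact prod_congr rfl fun j _ => by ring
  have hcount : ∑ i : Fin n, (n - 1 - i) = n * (n - 1) / 2 := by
    rw [Fin.sum_univ_eq_sum_range (fun i => n - 1 - i), sum_range_reflect (fun i => i) n,
      sum_range_id]
  rw [← prod_prod_Ioi_mul_eq_prod_prod_off_diag (fun j i => r i - r j),
    prod_congr rfl fun i _ => hpair i, prod_mul_distrib, prod_pow_eq_pow_sum, hcount]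

theorem eval_derivative_prod_X_sub_C {ι : Type*} [Fintype ι] [DecidableEq ι] (r : ι → R)
    (i : ι) : eval (r i) (derivative (∏ j, (X - C (r j)))) = ∏ j ∈ {i}ᶜ, (r i - r j) := by
  simp [Fintype.prod_eq_mul_prod_compl i, derivative_mul, eval_prod]

theorem prod_sub_eq_neg_one_pow_mul_eval_prod_X_sub_C {ι : Type*} [Fintype ι] (r : ι → R)
    (x : R) : ∏ i, (r i - x) = (-1) ^ Fintype.card ι * eval x (∏ i, (X - C (r i))) := by
  rw [eval_prod, ← card_univ, ← prod_const, ← prod_mul_distrib]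
  simp

theorem prod_prod_Ioi_sub_sq_eq_of_derivative_eq {n : ℕ} (r : Fin n → R) (m : R)
    (D : Multiset R) (hD : Multiset.card D = n - 1)
    (hP : derivative (∏ i, (X - C (r i))) = C m * (D.map fun d => X - C d).prod) :
    ∏ i, ∏ j ∈ Ioi i, (r i - r j) ^ 2 =
      (-1) ^ (n * (n - 1) / 2) * m ^ n * (D.map fun d => eval d (∏ i, (X - C (r i)))).prod := by
  set P := ∏ i, (X - C (r i))
  have hsign : ((-1 : R) ^ (n * (n - 1) / 2)) ^ 2 = 1 := by
    rw [← pow_mul, (even_two.mul_left _).neg_one_pow]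
  calc ∏ i, ∏ j ∈ Ioi i, (r i - r j) ^ 2
      = (-1) ^ (n * (n - 1) / 2) * ∏ i, ∏ j ∈ {i}ᶜ, (r i - r j) := by
        rw [prod_prod_compl_sub_eq_neg_one_pow_mul_prod_prod_Ioi_sq, ← mul_assoc, ← sq, hsign,
          one_mul]
    _ = (-1) ^ (n * (n - 1) / 2) * ∏ i, eval (r i) (derivative P) := by
        simp only [eval_derivative_prod_X_sub_C, P]
    _ = (-1) ^ (n * (n - 1) / 2) * (m ^ n * (D.map fun d => ∏ i, (r i - d)).prod) := by
        simp only [hP, eval_mul, eval_C, eval_multiset_prod, Multiset.map_map, Function.comp_def,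
          eval_sub, eval_X, prod_mul_distrib, prod_const, card_univ, Fintype.card_fin]
        rw [prod_eq_multiset_prod, Multiset.prod_map_prod_map]
        rfl
    _ = (-1) ^ (n * (n - 1) / 2) * m ^ n * (D.map fun d => eval d P).prod := by
        simp only [prod_sub_eq_neg_one_pow_mul_eval_prod_X_sub_C, Fintype.card_fin,
          Multiset.prod_map_mul, Multiset.map_const', Multiset.prod_replicate, hD, ← pow_mul,
          (Nat.even_mul_pred_self n).neg_one_pow, one_mul, P]
        ring

end Discriminant

theorem derivative_Pab (F : Type) [Field F] [CharZero F] (n : ℕ) (a : ℕ → F) (b : F) :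
    derivative (Pab F n a b) = Qa F n a := by
  conv_rhs => rw [as_sum_range_C_mul_X_pow (Qa F n a)]
  simp only [Pab, derivative_add, derivative_C, zero_add, derivative_sum, derivative_C_mul_X_pow,
    Nat.add_sub_cancel, Nat.cast_add_one]
  refine sum_congr rfl fun i _ => ?_
  rw [div_mul_cancel₀ _ (Nat.cast_add_one_ne_zero i)]

theorem eval_Pab (F : Type) [Field F] (n : ℕ) (a : ℕ → F) (b x : F) :
    eval x (Pab F n a b) = eval x (Pab F n a 0) + b := by
  simp [Pab, add_comm]

/-- The discriminant of `P_{a,b}` factors through the critical values of `P_{a,0}`: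
for any enumeration `r` of the roots of `P_{a,b}` in an algebraic closure,
`∏_{i<j} (rᵢ - rⱼ)² = (-1)^{n(n-1)/2} (nⁿ P_{a,0}(a₁/n) + nⁿ b) ∏_{i=2}^{n-1} (P_{a,0}(aᵢ) + b)`. -/
theorem disc_eq_product_of_critical_values (F : Type) [Field F] [CharZero F]
    (n : ℕ) (hn : 2 ≤ n) (a : ℕ → F) (b : F)
    (r : Fin n → AlgebraicClosure F)
    (hr : (Pab F n a b).map (algebraMap F (AlgebraicClosure F)) =
      ∏ i, (X - C (r i))) :
    (∏ i : Fin n, ∏ j ∈ Finset.Ioi i, (r i - r j) ^ 2) =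
      algebraMap F (AlgebraicClosure F)
        ((-1) ^ (n * (n - 1) / 2) *
          ((n : F) ^ n * (Pab F n a 0).eval (a 1 / (n : F)) + (n : F) ^ n * b) *
          ∏ i ∈ Finset.Icc 2 (n - 1), ((Pab F n a 0).eval (a i) + b)) := by
  set φ := algebraMap F (AlgebraicClosure F)
  set D := φ (a 1 / n) ::ₘ (Icc 2 (n - 1)).val.map (φ ∘ a)
  have hD : Multiset.card D = n - 1 := by
    simp only [D, Multiset.card_cons, Multiset.card_map, card_val, Nat.card_Icc]
    omega
  have hderiv : derivative (∏ i, (X - C (r i))) =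
      C (n : AlgebraicClosure F) * (D.map fun d => X - C d).prod := by
    rw [← hr, derivative_map, derivative_Pab]
    simp [D, Qa, Polynomial.map_mul, Polynomial.map_prod, mul_assoc]
  have heval (x : F) : eval (φ x) (∏ i, (X - C (r i))) = φ (eval x (Pab F n a 0) + b) := by
    rw [← hr, eval_map_apply, eval_Pab]
  rw [prod_prod_Ioi_sub_sq_eq_of_derivative_eq r _ D hD hderiv]
  simp only [D, Multiset.map_cons, Multiset.prod_cons, Multiset.map_map, Function.comp_apply,
    prod_map_val, heval, map_mul, map_add, map_pow, map_neg, map_one, map_natCast, map_prod]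
  ring
end

section
/- Let n ≥ 2 be an integer and let a_1, …, a_{n−1} be integers such that n−1 divides a_1 and n! divides a_i for each i with 2 ≤ i ≤ n−1. Then the polynomial P_{a,0} ∈ ℚ[x] has integer coefficients. -/
open Polynomial

section Antiderivative
variable {F : Type*} [Field F] (q : F[X])

theorem coeff_zero_sum_C_mul_X_pow_succ :
    (∑ i ∈ Finset.range (q.natDegree + 1), C (q.coeff i / ((i : F) + 1)) * X ^ (i + 1)).coeff 0
      = 0 := by
  simp [finsetSum_coeff]

theorem coeff_succ_sum_C_mul_X_pow_succ (m : ℕ) :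
    (∑ i ∈ Finset.range (q.natDegree + 1), C (q.coeff i / ((i : F) + 1)) * X ^ (i + 1)).coeff
      (m + 1) = q.coeff m / ((m : F) + 1) := by
  simp only [finsetSum_coeff, coeff_C_mul_X_pow, add_left_inj, Finset.sum_ite_eq,
    Finset.mem_range, Nat.lt_succ_iff]
  split_ifs with hm
  · rfl
  · rw [coeff_eq_zero_of_natDegree_lt (not_le.mp hm), zero_div]

end Antiderivative

theorem Pab_coeff_zero {F : Type} [Field F] (n : ℕ) (a : ℕ → F) (b : F) :
    (Pab F n a b).coeff 0 = b := by
  rw [Pab, coeff_add, coeff_C_zero, coeff_zero_sum_C_mul_X_pow_succ, add_zero]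

theorem Pab_coeff_succ {F : Type} [Field F] (n : ℕ) (a : ℕ → F) (b : F) (m : ℕ) :
    (Pab F n a b).coeff (m + 1) = (Qa F n a).coeff m / ((m : F) + 1) := by
  rw [Pab, coeff_add, coeff_C_succ, coeff_succ_sum_C_mul_X_pow_succ, zero_add]

theorem Qa_intCast {F : Type} [Field F] (n : ℕ) (hn : (n : F) ≠ 0) (a : ℕ → ℤ) :
    Qa F n (fun i => (a i : F)) = ((C (n : ℤ) * X - C (a 1)) *
      ∏ i ∈ Finset.Icc 2 (n - 1), (X - C (a i))).map (Int.castRingHom F) := by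
  simp only [Qa, Polynomial.map_mul, Polynomial.map_sub, Polynomial.map_prod, map_X, map_C,
    Int.coe_castRingHom, Int.cast_natCast, mul_sub, ← C_mul, mul_div_cancel₀ _ hn]

theorem C_dvd_prod_X_sub_C_sub_X_pow {R ι : Type*} [CommRing R] (s : Finset ι) (a : ι → R)
    (d : R) (h : ∀ i ∈ s, d ∣ a i) : C d ∣ ∏ i ∈ s, (X - C (a i)) - X ^ s.card := by
  rw [← Ideal.mem_span_singleton, ← Ideal.Quotient.eq, map_prod, ← Finset.prod_const,
    map_prod]
  refine Finset.prod_congr rfl fun i hi => ?_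
  rw [Ideal.Quotient.eq, sub_sub_cancel_left, neg_mem_iff, Ideal.mem_span_singleton]
  exact map_dvd C (h i hi)

theorem dvd_coeff_linear_mul_X_pow (n : ℕ) (hn : 2 ≤ n) (c : ℤ) (hc : (n : ℤ) - 1 ∣ c) (k : ℕ) :
    (k : ℤ) + 1 ∣ ((C (n : ℤ) * X - C c) * X ^ (n - 2)).coeff k := by
  obtain ⟨m, rfl⟩ := Nat.exists_eq_add_of_le' hn
  rw [coeff_mul_X_pow', coeff_sub, coeff_C_mul_X, coeff_C, Nat.add_sub_cancel]
  rcases (show k < m ∨ k = m ∨ k = m + 1 ∨ m + 1 < k by omega) with hk | rfl | rfl | hk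
  · simp [hk.not_ge]
  · simpa [add_sub_assoc, show (2 : ℤ) - 1 = 1 by norm_num] using hc
  · simp [add_assoc, one_add_one_eq_two]
  · simp [show k - m ≠ 0 by omega, show k - m ≠ 1 by omega]

theorem dvd_coeff_linear_mul (n : ℕ) (hn : 2 ≤ n) (c : ℤ) (hc : (n : ℤ) - 1 ∣ c) (R : ℤ[X])
    (hR : C (n.factorial : ℤ) ∣ R - X ^ (n - 2)) (hdeg : R.natDegree ≤ n - 2) (k : ℕ) :
    (k : ℤ) + 1 ∣ ((C (n : ℤ) * X - C c) * R).coeff k := by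
  rcases lt_or_ge k n with hk | hk
  · obtain ⟨S, hS⟩ := hR
    have hk_dvd : (k : ℤ) + 1 ∣ n.factorial := by exact_mod_cast Nat.dvd_factorial k.succ_pos hk
    rw [sub_eq_iff_eq_add'.mp hS, mul_add, coeff_add, mul_left_comm, coeff_C_mul]
    exact dvd_add (dvd_coeff_linear_mul_X_pow n hn c hc k) (hk_dvd.mul_right _)
  · have hlin : (C (n : ℤ) * X - C c).natDegree ≤ 1 := by compute_degree
    rw [coeff_eq_zero_of_natDegree_lt ((natDegree_mul_le).trans_lt (by omega))]
    exact dvd_zero _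

theorem Pab_integer_coefficients (n : ℕ) (hn : 2 ≤ n) (a : ℕ → ℤ)
    (h1 : ((n : ℤ) - 1) ∣ a 1)
    (h2 : ∀ i, 2 ≤ i → i ≤ n - 1 → (n.factorial : ℤ) ∣ a i) :
    ∀ m : ℕ, ∃ z : ℤ, (Pab ℚ n (fun i => (a i : ℚ)) 0).coeff m = (z : ℚ) := by
  set R := ∏ i ∈ Finset.Icc 2 (n - 1), (X - C (a i))
  have hcard : (Finset.Icc 2 (n - 1)).card = n - 2 := by simp only [Nat.card_Icc]; omega
  have hR : C (n.factorial : ℤ) ∣ R - X ^ (n - 2) := hcard ▸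
    C_dvd_prod_X_sub_C_sub_X_pow _ _ _ fun i hi => (Finset.mem_Icc.mp hi).elim (h2 i)
  have hdeg : R.natDegree ≤ n - 2 := (natDegree_prod_le _ _).trans_eq <| by
    simp only [natDegree_X_sub_C, Finset.sum_const, hcard, smul_eq_mul, mul_one]
  intro m
  cases m with
  | zero => exact ⟨0, by rw [Pab_coeff_zero, Int.cast_zero]⟩
  | succ k =>
    obtain ⟨z, hz⟩ := dvd_coeff_linear_mul n hn (a 1) h1 R hR hdeg k
    refine ⟨z, ?_⟩
    rw [Pab_coeff_succ, Qa_intCast n (Nat.cast_ne_zero.mpr (by omega)), coeff_map, hz, eq_intCast]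
    push_cast
    field_simp
end

section
/- Let n ≥ 2 be an integer and let a = (a_1, …, a_{n−1}) ∈ ℝ^{n−1}. Then there exists B ≥ 0 such that for every real number b with |b| > B, the polynomial P_{a,b} has at most 2 real roots. -/
/-!
`P_{a,b} = b + P_{a,0}`, so all the `P_{a,b}` share their critical points, and their critical
values are those of `P_{a,0}` shifted by `b`. Once `|b|` exceeds every `|P_{a,0}(c)|` at a
critical point `c`, all critical values of `P_{a,b}` have the sign of `b`. A real polynomial whose
critical values are all positive has at most two real roots: on `[u, v]` between two roots its
minimum cannot be attained inside, so it is nonnegative there, and a third root between two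
others would then be a local minimum with value `0`.
-/

open Polynomial

open Set

section LocalMinPos

variable {f : ℝ → ℝ} {u v : ℝ}

theorem nonneg_of_mem_Icc_of_forall_isLocalMin_pos (hf : ContinuousOn f (Icc u v))
    (hmin : ∀ c, IsLocalMin f c → 0 < f c) (hu : f u = 0) (hv : f v = 0) :
    ∀ x ∈ Icc u v, 0 ≤ f x := by
  intro x hx
  obtain ⟨c, hc, hc_min⟩ := isCompact_Icc.exists_isMinOn ⟨x, hx⟩ hf
  have hc_nonneg : 0 ≤ f c := by
    rcases eq_endpoints_or_mem_Ioo_of_mem_Icc hc with rfl | rfl | hc'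
    · exact hu.ge
    · exact hv.ge
    · exact (hmin c (hc_min.isLocalMin (Icc_mem_nhds hc'.1 hc'.2))).le
  exact hc_nonneg.trans (hc_min hx)

theorem pos_of_mem_Ioo_of_forall_isLocalMin_pos (hf : ContinuousOn f (Icc u v))
    (hmin : ∀ c, IsLocalMin f c → 0 < f c) (hu : f u = 0) (hv : f v = 0) :
    ∀ y ∈ Ioo u v, 0 < f y := by
  intro y hy
  have hnonneg := nonneg_of_mem_Icc_of_forall_isLocalMin_pos hf hmin hu hv
  refine (hnonneg y (Ioo_subset_Icc_self hy)).lt_of_ne' fun hy0 ↦ ?_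
  have hy_min : IsLocalMin f y := by
    filter_upwards [Icc_mem_nhds hy.1 hy.2] with x hx
    exact hy0 ▸ hnonneg x hx
  exact (hmin y hy_min).ne' hy0

end LocalMinPos

namespace Polynomial

theorem card_roots_toFinset_le_two_of_forall_isRoot_derivative_pos {p : ℝ[X]}
    (hp : ∀ c, p.derivative.IsRoot c → 0 < p.eval c) : p.roots.toFinset.card ≤ 2 := by
  have hmin : ∀ c, IsLocalMin (fun x ↦ p.eval x) c → 0 < p.eval c := fun c hc ↦
    hp c (by simpa only [IsRoot.def, Polynomial.deriv] using hc.deriv_eq_zero)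
  by_contra! hcard
  set r := p.roots.toFinset.orderEmbOfFin rfl
  have hroot : ∀ i, p.IsRoot (r i) := fun i ↦
    isRoot_of_mem_roots (Multiset.mem_toFinset.mp (Finset.orderEmbOfFin_mem _ rfl i))
  have h01 : r ⟨0, by omega⟩ < r ⟨1, by omega⟩ := r.strictMono (by simp)
  have h12 : r ⟨1, by omega⟩ < r ⟨2, by omega⟩ := r.strictMono (by simp)
  exact (pos_of_mem_Ioo_of_forall_isLocalMin_pos p.continuousOn hmin (hroot _) (hroot _)
    _ ⟨h01, h12⟩).ne' (hroot _)

theorem exists_forall_isRoot_derivative_abs_eval_le (p : ℝ[X]) :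
    ∃ B, 0 ≤ B ∧ ∀ c, p.derivative.IsRoot c → |p.eval c| ≤ B := by
  by_cases hp : p.derivative = 0
  · refine ⟨|p.eval 0|, abs_nonneg _, fun c _ ↦ ?_⟩
    rw [eq_C_of_derivative_eq_zero hp]
    simp only [eval_C, le_refl]
  · refine ⟨∑ c ∈ p.derivative.roots.toFinset, |p.eval c|,
      Finset.sum_nonneg fun _ _ ↦ abs_nonneg _, fun c hc ↦ ?_⟩
    exact Finset.single_le_sum (f := fun c ↦ |p.eval c|) (fun _ _ ↦ abs_nonneg _)
      (Multiset.mem_toFinset.mpr ((mem_roots hp).mpr hc))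

theorem exists_forall_card_roots_toFinset_C_add_le_two (p : ℝ[X]) :
    ∃ B, 0 ≤ B ∧ ∀ b, B < |b| → (C b + p).roots.toFinset.card ≤ 2 := by
  obtain ⟨B, hB, hcrit⟩ := exists_forall_isRoot_derivative_abs_eval_le p
  refine ⟨B, hB, fun b hb ↦ ?_⟩
  have hderiv : (C b + p).derivative = p.derivative := by
    rw [derivative_add, derivative_C, zero_add]
  rcases (abs_pos.mp (hB.trans_lt hb)).lt_or_gt with hb_neg | hb_pos
  · rw [← roots_neg]
    refine card_roots_toFinset_le_two_of_forall_isRoot_derivative_pos fun c hc ↦ ?_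
    have hc' := hcrit c (by rwa [derivative_neg, hderiv, IsRoot.def, eval_neg, neg_eq_zero] at hc)
    rw [abs_of_neg hb_neg] at hb
    simp only [eval_neg, eval_add, eval_C]
    linarith [le_abs_self (p.eval c)]
  · refine card_roots_toFinset_le_two_of_forall_isRoot_derivative_pos fun c hc ↦ ?_
    have hc' := hcrit c (by rwa [hderiv] at hc)
    rw [abs_of_pos hb_pos] at hb
    simp only [eval_add, eval_C]
    linarith [neg_abs_le (p.eval c)]

end Polynomial

theorem Pab_eq_C_add {F : Type} [Field F] (n : ℕ) (a : ℕ → F) (b : F) :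
    Pab F n a b = C b + Pab F n a 0 := by
  simp only [Pab, C_0, zero_add]

theorem at_most_two_real_roots_for_large_b_general (n : ℕ) (a : ℕ → ℝ) :
    ∃ B : ℝ, 0 ≤ B ∧ ∀ b : ℝ, B < |b| →
      (Pab ℝ n a b).roots.toFinset.card ≤ 2 := by
  simpa only [← Pab_eq_C_add] using exists_forall_card_roots_toFinset_C_add_le_two (Pab ℝ n a 0)

theorem at_most_two_real_roots_for_large_b (n : ℕ) (hn : 2 ≤ n) (a : ℕ → ℝ) :
    ∃ B : ℝ, 0 ≤ B ∧ ∀ b : ℝ, B < |b| →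
      (Pab ℝ n a b).roots.toFinset.card ≤ 2 :=
  at_most_two_real_roots_for_large_b_general n a
end
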